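/- arXiv:2505.09425 — 2 statements merged into one kernel-verified Lean document; each statement's English description precedes it below -/
import Mathlib

section
/- Fix a constant q > 0 and the bowl transform ψ : ℝ^p → ℝ^(p+1). Then ψ is injective: for all x, y ∈ ℝ^p, ψ(x) = ψ(y) implies x = y. -/
/-! Write `u = tanh t`. Since `u / (1 - u) = (e^{2t} - 1) / 2`, the two radial profiles
`S(t) = u²(1-u)²` and `H(t) = u⁶(1-u)²` of the bowl transform satisfy
`H(t) = (S(t) · t · (e^{2t} - 1) / (2t))²`. Equal images force `‖x‖ S(‖x‖/q) = ‖y‖ S(‖y‖/q)`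
(take norms of the first `p` coordinates) and equal heights, hence equal values of the secant
slope `(e^s - 1) / s` of `exp` at `s = 2‖x‖/q` and `s = 2‖y‖/q`; strict convexity of `exp` makes
that slope strictly increasing, so `‖x‖ = ‖y‖`, and then the first `p` coordinates give `x = y`. -/

open Real

/-- The bowl transform `ψ : ℝ^p → ℝ^(p+1)`.  With `u(x) = tanh(‖x‖/q)`, the first `p`
coordinates are `v₁(x) = 10·u(x)²·(1−u(x))²·x` and the last coordinate is
`v₂(x) = 10·u(x)⁶·(1−u(x))²`. -/
noncomputable def bowl (p : ℕ) (q : ℝ) (x : EuclideanSpace ℝ (Fin p)) :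
    EuclideanSpace ℝ (Fin (p + 1)) :=
  WithLp.toLp 2 (Fin.snoc (α := fun _ : Fin (p + 1) => ℝ)
    (fun i : Fin p =>
      10 * Real.tanh (‖x‖ / q) ^ 2 * (1 - Real.tanh (‖x‖ / q)) ^ 2 * x i)
    (10 * Real.tanh (‖x‖ / q) ^ 6 * (1 - Real.tanh (‖x‖ / q)) ^ 2))

open Set

lemma tanh_eq_zero_iff {t : ℝ} : tanh t = 0 ↔ t = 0 :=
  tanh_injective.eq_iff' tanh_zero

lemma one_sub_tanh_ne_zero (t : ℝ) : 1 - tanh t ≠ 0 :=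
  (sub_pos.2 (tanh_lt_one t)).ne'

lemma tanh_eq_mul_one_sub_tanh (t : ℝ) : tanh t = (exp (2 * t) - 1) / 2 * (1 - tanh t) := by
  have hsum : exp t + exp (-t) ≠ 0 := by positivity
  rw [tanh_eq, show 2 * t = t - -t by ring, exp_sub]
  field_simp
  ring

lemma exp_sub_one_div_strictMonoOn : StrictMonoOn (fun s => (exp s - 1) / s) (Ioi 0) :=
  fun s hs r hr hsr => by
    simpa using strictConvexOn_exp.secant_strict_mono (mem_univ 0) (mem_univ s) (mem_univ r)
      hs.ne' hr.ne' hsr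

noncomputable def bowlScale (t : ℝ) : ℝ := tanh t ^ 2 * (1 - tanh t) ^ 2

noncomputable def bowlHeight (t : ℝ) : ℝ := tanh t ^ 6 * (1 - tanh t) ^ 2

lemma bowlScale_nonneg (t : ℝ) : 0 ≤ bowlScale t := by
  unfold bowlScale; positivity

lemma bowlScale_eq_zero_iff {t : ℝ} : bowlScale t = 0 ↔ t = 0 := by
  simp [bowlScale, one_sub_tanh_ne_zero, tanh_eq_zero_iff]

lemma bowlHeight_eq_zero_iff {t : ℝ} : bowlHeight t = 0 ↔ t = 0 := by
  simp [bowlHeight, one_sub_tanh_ne_zero, tanh_eq_zero_iff]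

lemma bowlHeight_eq_sq {t : ℝ} (ht : t ≠ 0) :
    bowlHeight t = (bowlScale t * t * ((exp (2 * t) - 1) / (2 * t))) ^ 2 := by
  have hslope : t * ((exp (2 * t) - 1) / (2 * t)) = (exp (2 * t) - 1) / 2 := by
    field_simp
  rw [mul_assoc, hslope, bowlHeight, bowlScale]
  linear_combination (tanh t ^ 4 * (1 - tanh t) ^ 2 *
    (tanh t + (exp (2 * t) - 1) / 2 * (1 - tanh t))) * tanh_eq_mul_one_sub_tanh t

lemma eq_of_bowlScale_mul_eq_of_bowlHeight_eq {a b : ℝ} (ha : 0 ≤ a) (hb : 0 ≤ b)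
    (hscale : bowlScale a * a = bowlScale b * b) (hheight : bowlHeight a = bowlHeight b) :
    a = b := by
  rcases ha.eq_or_lt with rfl | ha
  · exact (bowlHeight_eq_zero_iff.1 (hheight.symm.trans (bowlHeight_eq_zero_iff.2 rfl))).symm
  rcases hb.eq_or_lt with rfl | hb
  · exact bowlHeight_eq_zero_iff.1 (hheight.trans (bowlHeight_eq_zero_iff.2 rfl))
  have hscale_pos : 0 < bowlScale b * b :=
    mul_pos ((bowlScale_nonneg b).lt_of_ne' (bowlScale_eq_zero_iff.not.2 hb.ne')) hb
  have hslope : (exp (2 * a) - 1) / (2 * a) = (exp (2 * b) - 1) / (2 * b) := by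
    rw [bowlHeight_eq_sq ha.ne', bowlHeight_eq_sq hb.ne', hscale] at hheight
    have hnonneg {s : ℝ} (hs : 0 < s) : 0 ≤ (exp s - 1) / s :=
      div_nonneg (sub_nonneg.2 (one_le_exp hs.le)) hs.le
    exact mul_left_cancel₀ hscale_pos.ne'
      ((pow_left_inj₀ (mul_nonneg hscale_pos.le (hnonneg (by positivity)))
        (mul_nonneg hscale_pos.le (hnonneg (by positivity))) two_ne_zero).1 hheight)
  have := exp_sub_one_div_strictMonoOn.injOn (mem_Ioi.2 (by positivity : (0 : ℝ) < 2 * a))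
    (mem_Ioi.2 (by positivity : (0 : ℝ) < 2 * b)) hslope
  linarith

lemma bowl_eq_bowl {p : ℕ} {q : ℝ} {x y : EuclideanSpace ℝ (Fin p)}
    (h : bowl p q x = bowl p q y) :
    bowlScale (‖x‖ / q) • x = bowlScale (‖y‖ / q) • y ∧
      bowlHeight (‖x‖ / q) = bowlHeight (‖y‖ / q) := by
  have hcoord (i : Fin (p + 1)) := congrFun (congrArg WithLp.ofLp h) i
  refine ⟨?_, ?_⟩
  · ext i
    have := hcoord i.castSucc
    simp only [bowl, Fin.snoc_castSucc] at this
    simp only [PiLp.smul_apply, smul_eq_mul, bowlScale]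
    linarith
  · have := hcoord (Fin.last p)
    simp only [bowl, Fin.snoc_last] at this
    simp only [bowlHeight]
    linarith

/-- for `q > 0`, the bowl transform `ψ : ℝ^p → ℝ^(p+1)` is injective. -/
theorem bowl_injective (p : ℕ) (q : ℝ) (hq : 0 < q)
    (x y : EuclideanSpace ℝ (Fin p)) (hxy : bowl p q x = bowl p q y) : x = y := by
  obtain ⟨hscale, hheight⟩ := bowl_eq_bowl hxy
  have hradius : bowlScale (‖x‖ / q) * (‖x‖ / q) = bowlScale (‖y‖ / q) * (‖y‖ / q) := by
    have := congrArg (‖·‖ / q) hscale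
    simpa only [norm_smul, Real.norm_of_nonneg (bowlScale_nonneg _), mul_div_assoc] using this
  have hxy_radius : ‖x‖ / q = ‖y‖ / q :=
    eq_of_bowlScale_mul_eq_of_bowlHeight_eq (by positivity) (by positivity) hradius hheight
  rw [hxy_radius] at hscale
  by_cases hy : ‖y‖ / q = 0
  · have hy0 : y = 0 := by simpa [hq.ne'] using hy
    have hx0 : x = 0 := by simpa [hy, hq.ne'] using hxy_radius
    rw [hx0, hy0]
  · exact smul_right_injective _ (bowlScale_eq_zero_iff.not.2 hy) hscale
end

section
/- Let d ≥ 2, let θ = (θ_{i,j})_{1≤i<j≤d} be a family of angles, and let U(θ) = Q^{d−1}(θ)···Q^1(θ) be the ordered product of Givens rotations. Then for every k ∈ {1, …, d−1}, the k-th row of U(θ) equals the k-th row of the partial product Q^k(θ)·Q^{k−1}(θ)···Q^1(θ); in particular, the k-th row of U(θ) depends only on the angles θ_{i,j} with i ≤ k. -/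
open Matrix Real

/-- The `d×d` Givens rotation matrix `Q_{i,j}(θ)`: the identity matrix with entries
`(i,i)` and `(j,j)` replaced by `cos θ`, entry `(i,j)` replaced by `sin θ`, and entry
`(j,i)` replaced by `−sin θ`. -/
noncomputable def givens (d : ℕ) (i j : Fin d) (θ : ℝ) : Matrix (Fin d) (Fin d) ℝ :=
  Matrix.of fun k l =>
    if k = i ∧ l = i then Real.cos θ
    else if k = j ∧ l = j then Real.cos θ
    else if k = i ∧ l = j then Real.sin θ
    else if k = j ∧ l = i then -Real.sin θ
    else if k = l then 1 else 0

/-- `Q^k(θ) = Q_{k,d}(θ_{k,d}) · Q_{k,d−1}(θ_{k,d−1}) ··· Q_{k,k+1}(θ_{k,k+1})`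
(indices `0,…,d−1` here play the role of the paper's `1,…,d`):
the ordered product of the Givens rotations in row `k`, with the column index
decreasing from left to right. -/
noncomputable def Qmat (d : ℕ) (θ : Fin d → Fin d → ℝ) (k : Fin d) :
    Matrix (Fin d) (Fin d) ℝ :=
  ((((List.finRange d).filter (fun j => k < j)).reverse).map
    (fun j => givens d k j (θ k j))).prod

/-- `U(θ) = Q^{d−1}(θ) · Q^{d−2}(θ) ··· Q^1(θ)` (in the 0-indexed convention,
`Q^{d-1} ··· Q^0`, where the extra leftmost factor is the empty product `I`). -/
noncomputable def Umat (d : ℕ) (θ : Fin d → Fin d → ℝ) : Matrix (Fin d) (Fin d) ℝ :=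
  (((List.finRange d).reverse).map (fun k => Qmat d θ k)).prod

/-- Membership in the parameter set `Θ`: a family of angles `θ = (θ_{i,j})_{i<j}`
(encoded as a function on all pairs, set to `0` on irrelevant pairs `i ≥ j`)
with `0 ≤ θ_{1,j} < 2π` for the first row and `0 ≤ θ_{i,j} < π` otherwise. -/
def memTheta (d : ℕ) (θ : Fin d → Fin d → ℝ) : Prop :=
  ∀ i j : Fin d,
    (i < j → 0 ≤ θ i j ∧
      (if (i : ℕ) = 0 then θ i j < 2 * Real.pi else θ i j < Real.pi)) ∧
    (¬ i < j → θ i j = 0)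
/-- The partial product `Q^k(θ)·Q^{k−1}(θ)···Q^1(θ)` (0-indexed: `Q^k ··· Q^0`). -/
noncomputable def Upartial (d : ℕ) (θ : Fin d → Fin d → ℝ) (k : Fin d) :
    Matrix (Fin d) (Fin d) ℝ :=
  ((((List.finRange d).filter (fun i => i ≤ k)).reverse).map
    (fun i => Qmat d θ i)).prod


lemma givens_row_eq (d : ℕ) (i j : Fin d) (t : ℝ) (k : Fin d) (hki : k ≠ i) (hkj : k ≠ j) :
    ∀ l, givens d i j t k l = (1 : Matrix (Fin d) (Fin d) ℝ) k l := by
  intro l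
  simp [givens, Matrix.one_apply, hki, hkj]

lemma prod_row_one {d : ℕ} (k : Fin d) :
    ∀ (L : List (Matrix (Fin d) (Fin d) ℝ)),
      (∀ M ∈ L, ∀ l, M k l = (1 : Matrix (Fin d) (Fin d) ℝ) k l) →
      ∀ l, L.prod k l = (1 : Matrix (Fin d) (Fin d) ℝ) k l
  | [], _, l => by simp
  | M :: L, h, l => by
    have hM := h M (List.mem_cons_self ..)
    have hL := prod_row_one k L (fun N hn => h N (List.mem_cons_of_mem _ hn)) l
    rw [List.prod_cons, Matrix.mul_apply]
    simp only [hM]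
    rw [← Matrix.mul_apply, Matrix.one_mul]
    exact hL

lemma Qmat_row_one (d : ℕ) (θ : Fin d → Fin d → ℝ) (m k : Fin d) (hk : k < m) :
    ∀ l, Qmat d θ m k l = (1 : Matrix (Fin d) (Fin d) ℝ) k l := by
  apply prod_row_one
  intro M hM l
  simp only [List.mem_map, List.mem_reverse, List.mem_filter, decide_eq_true_eq] at hM
  obtain ⟨j, ⟨-, hj⟩, rfl⟩ := hM
  exact givens_row_eq d m j _ k (ne_of_lt hk) (ne_of_lt (hk.trans hj)) l

lemma row_prod_filter (d : ℕ) (θ : Fin d → Fin d → ℝ) (k : Fin d) :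
    ∀ l : List (Fin d), l.Pairwise (fun a b => b ≤ a) →
      ∀ j, ((l.map (Qmat d θ)).prod) k j
        = (((l.filter (fun i => i ≤ k)).map (Qmat d θ)).prod) k j
  | [], _, j => rfl
  | i :: l, h, j => by
    rw [List.pairwise_cons] at h
    obtain ⟨h1, h2⟩ := h
    by_cases hik : i ≤ k
    · have hfl : l.filter (fun i => i ≤ k) = l :=
        List.filter_eq_self.mpr (fun a ha => by simpa using (h1 a ha).trans hik)
      rw [List.filter_cons_of_pos (by simpa using hik), hfl]
    · have hki : k < i := lt_of_not_ge hik
      rw [List.filter_cons_of_neg (by simpa using hik)]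
      rw [List.map_cons, List.prod_cons, Matrix.mul_apply]
      simp only [Qmat_row_one d θ i k hki]
      rw [← Matrix.mul_apply, Matrix.one_mul]
      exact row_prod_filter d θ k l h2 j

/-- for every `k ∈ {1,…,d−1}` (0-indexed: `k + 1 < d`), the `k`-th row of
`U(θ) = Q^{d−1}(θ)···Q^1(θ)` equals the `k`-th row of the partial product
`Q^k(θ)·Q^{k−1}(θ)···Q^1(θ)`; in particular it depends only on the angles
`θ_{i,j}` with `i ≤ k`. -/
theorem row_Umat_eq_row_partial (d : ℕ) (hd : 2 ≤ d)
    (θ : Fin d → Fin d → ℝ) (k : Fin d) (hk : (k : ℕ) + 1 < d) :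
    (∀ j : Fin d, Umat d θ k j = Upartial d θ k k j) ∧
    (∀ θ' : Fin d → Fin d → ℝ,
      (∀ i j : Fin d, i ≤ k → θ' i j = θ i j) →
      ∀ j : Fin d, Umat d θ' k j = Umat d θ k j) := by
  have hpw : ((List.finRange d).reverse).Pairwise (fun a b : Fin d => b ≤ a) :=
    List.pairwise_reverse.mpr ((List.pairwise_le_finRange d).imp (fun h => h))
  have main : ∀ θ₀ : Fin d → Fin d → ℝ, ∀ j : Fin d,
      Umat d θ₀ k j = Upartial d θ₀ k k j := by
    intro θ₀ j
    have := row_prod_filter d θ₀ k ((List.finRange d).reverse) hpw j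
    rw [Umat, this, Upartial, ← List.filter_reverse]
  refine ⟨main θ, fun θ' hθ' j => ?_⟩
  rw [main θ' j, main θ j]
  have hUp : Upartial d θ' k = Upartial d θ k := by
    unfold Upartial
    congr 1
    apply List.map_congr_left
    intro i hi
    simp only [List.mem_reverse, List.mem_filter, decide_eq_true_eq] at hi
    have : θ' i = θ i := funext fun j => hθ' i j hi.2
    simp [Qmat, this]
  rw [hUp]
end
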